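/- Let $S$ be a spectral random vector in dimension $d$, with $\gamma = 0$ case: set $X_j = \sigma_j (S_j + E)$ with $\sigma \in (0,\infty)^d$ and $E \sim \mathrm{Exp}(1)$ independent of $S$. Let $a \in [0,\infty)^d$ with $a^\top \sigma > 0$ and $P[a^\top X > 0] > 0$. Then for every $x \ge 0$, $P[a^\top X > x \mid a^\top X > 0] = e^{-x/(a^\top \sigma)}$; i.e., conditionally on being positive, the linear combination $a^\top X$ is exponentially distributed with mean $a^\top \sigma$. -/

import Mathlib

open MeasureTheory ProbabilityTheory

/-!
Write `b_j = a_j σ_j ≥ 0` and `c = ∑ b_j`. Because `b_j` is a finite nonnegative real, it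
distributes over `S_j + E` even when `S_j = -∞`, so `aᵀX = U + cE` with `U = ∑ b_j S_j ≤ 0`
a function of `S`, hence independent of `E`. Integrating out `E` first,
`P[U + cE > x] = e^{-x/c} E[e^{U/c}]`, since the threshold `(x - U)/c` is nonnegative and
there the exponential tail is known; the factor `E[e^{U/c}]` cancels in the ratio.
-/

theorem EReal.coe_finset_sum {ι : Type*} (s : Finset ι) (f : ι → ℝ) :
    ((∑ i ∈ s, f i : ℝ) : EReal) = ∑ i ∈ s, (f i : EReal) :=
  map_sum (⟨⟨(↑), EReal.coe_zero⟩, EReal.coe_add⟩ : ℝ →+ EReal) f s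

theorem EReal.coe_mul_coe_mul_add_coe {a b : ℝ} (ha : 0 ≤ a) (hb : 0 ≤ b) (x : EReal)
    (y : ℝ) :
    (a : EReal) * (b * (x + y)) = ((a * b : ℝ) : EReal) * x + ((a * b * y : ℝ) : EReal) := by
  rw [← mul_assoc, ← EReal.coe_mul, EReal.left_distrib_of_nonneg_of_ne_top
    (EReal.coe_nonneg.2 (mul_nonneg ha hb)) (EReal.coe_ne_top _), ← EReal.coe_mul]

section ExponentialTail

variable {Ω : Type*} [MeasurableSpace Ω] {μ : Measure Ω} {E : Ω → ℝ} {c x : ℝ}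

theorem measure_lt_add_mul_of_exp_tail
    (hE : ∀ t : ℝ, 0 ≤ t → μ {ω | t < E ω} = ENNReal.ofReal (Real.exp (-t)))
    (hc : 0 < c) (hx : 0 ≤ x) {u : EReal} (hu : u ≤ 0) :
    μ {ω | (x : EReal) < u + ((c * E ω : ℝ) : EReal)} =
      ENNReal.ofReal (Real.exp (-x / c)) * EReal.exp (u / c) := by
  induction u using EReal.rec with
  | bot => simp [EReal.bot_div_of_pos_ne_top (EReal.coe_pos.2 hc) (EReal.coe_ne_top c)]
  | top => exact absurd hu (by simp)
  | coe u =>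
    have hset :
        {ω | (x : EReal) < u + ((c * E ω : ℝ) : EReal)} = {ω | (x - u) / c < E ω} := by
      ext ω
      simp only [Set.mem_ofPred_eq, ← EReal.coe_add, EReal.coe_lt_coe_iff, div_lt_iff₀ hc]
      constructor <;> intro h <;> linarith
    have hu' : u ≤ 0 := EReal.coe_nonpos.1 hu
    rw [hset, hE _ (div_nonneg (by linarith) hc.le), ← EReal.coe_div, EReal.exp_coe,
      ← ENNReal.ofReal_mul (Real.exp_nonneg _), ← Real.exp_add]
    congr 2
    ring

variable [IsFiniteMeasure μ] {V : Ω → EReal}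

theorem measure_lt_add_mul_eq_mul_lintegral_exp (hV : Measurable V) (hEm : Measurable E)
    (hVE : IndepFun V E μ) (hV_nonpos : ∀ ω, V ω ≤ 0)
    (hE : ∀ t : ℝ, 0 ≤ t → μ {ω | t < E ω} = ENNReal.ofReal (Real.exp (-t)))
    (hc : 0 < c) (hx : 0 ≤ x) :
    μ {ω | (x : EReal) < V ω + ((c * E ω : ℝ) : EReal)} =
      ENNReal.ofReal (Real.exp (-x / c)) * ∫⁻ ω, EReal.exp (V ω / c) ∂μ := by
  set A := {p : EReal × ℝ | (x : EReal) < p.1 + ((c * p.2 : ℝ) : EReal)}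
  have hA : MeasurableSet A :=
    measurableSet_lt measurable_const (measurable_fst.add (by fun_prop))
  change μ ((fun ω => (V ω, E ω)) ⁻¹' A) = _
  rw [← Measure.map_apply (hV.prodMk hEm) hA,
    (indepFun_iff_map_prod_eq_prod_map_map hV.aemeasurable hEm.aemeasurable).1 hVE,
    Measure.prod_apply hA, lintegral_map (measurable_measure_prodMk_left hA) hV,
    ← lintegral_const_mul' _ _ ENNReal.ofReal_ne_top]
  refine lintegral_congr fun ω => ?_
  rw [Measure.map_apply hEm (measurable_prodMk_left hA)]
  exact measure_lt_add_mul_of_exp_tail hE hc hx (hV_nonpos ω)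

theorem measure_lt_add_mul_eq_exp_mul (hV : Measurable V) (hEm : Measurable E)
    (hVE : IndepFun V E μ) (hV_nonpos : ∀ ω, V ω ≤ 0)
    (hE : ∀ t : ℝ, 0 ≤ t → μ {ω | t < E ω} = ENNReal.ofReal (Real.exp (-t)))
    (hc : 0 < c) (hx : 0 ≤ x) :
    μ {ω | (x : EReal) < V ω + ((c * E ω : ℝ) : EReal)} =
      ENNReal.ofReal (Real.exp (-x / c)) *
        μ {ω | (0 : EReal) < V ω + ((c * E ω : ℝ) : EReal)} := by
  rw [measure_lt_add_mul_eq_mul_lintegral_exp hV hEm hVE hV_nonpos hE hc hx,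
    ← EReal.coe_zero, measure_lt_add_mul_eq_mul_lintegral_exp hV hEm hVE hV_nonpos hE hc le_rfl]
  simp

end ExponentialTail

theorem gp_linear_combination_gumbel_general
    {Ω : Type*} [MeasurableSpace Ω] (μ : Measure Ω) [IsProbabilityMeasure μ]
    {d : ℕ}
    (σ : Fin d → ℝ) (hσ : ∀ j, 0 < σ j)
    (a : Fin d → ℝ) (ha : ∀ j, 0 ≤ a j) (haσ : 0 < ∑ j, a j * σ j)
    (S : Ω → Fin d → EReal) (E : Ω → ℝ)
    (hSmeas : Measurable S) (hEmeas : Measurable E)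
    (hSle : ∀ ω j, S ω j ≤ 0)
    (hE : ∀ t : ℝ, 0 ≤ t → μ {ω | t < E ω} = ENNReal.ofReal (Real.exp (-t)))
    (hindep : IndepFun S E μ)
    (X : Ω → Fin d → EReal)
    (hX : ∀ ω j, X ω j = (σ j : EReal) * (S ω j + (E ω : EReal)))
    (hpos : 0 < μ {ω | (0 : EReal) < ∑ j, (a j : EReal) * X ω j}) :
    ∀ x : ℝ, 0 ≤ x →
      (μ {ω | (x : EReal) < ∑ j, (a j : EReal) * X ω j}).toReal /
          (μ {ω | (0 : EReal) < ∑ j, (a j : EReal) * X ω j}).toReal =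
        Real.exp (-x / ∑ j, a j * σ j) := by
  intro x hx
  let U : (Fin d → EReal) → EReal := fun s => ∑ j, ((a j * σ j : ℝ) : EReal) * s j
  have hU : Measurable U :=
    Finset.measurable_sum _ fun j _ => (measurable_pi_apply j).const_mul _
  have hUS : ∀ ω, U (S ω) ≤ 0 := fun ω => Finset.sum_nonpos fun j _ =>
    EReal.mul_nonpos_iff.2
      (Or.inl ⟨EReal.coe_nonneg.2 (mul_nonneg (ha j) (hσ j).le), hSle ω j⟩)
  have hsum : ∀ ω, ∑ j, (a j : EReal) * X ω j =
      U (S ω) + (((∑ j, a j * σ j) * E ω : ℝ) : EReal) := fun ω => by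
    simp_rw [hX, EReal.coe_mul_coe_mul_add_coe (ha _) (hσ _).le]
    rw [Finset.sum_add_distrib, Finset.sum_mul, EReal.coe_finset_sum]
  simp_rw [hsum] at hpos ⊢
  rw [measure_lt_add_mul_eq_exp_mul (V := fun ω => U (S ω)) (hU.comp hSmeas) hEmeas
    (hindep.comp hU measurable_id) hUS hE haσ hx, ENNReal.toReal_mul,
    ENNReal.toReal_ofReal (Real.exp_nonneg _),
    mul_div_assoc, div_self (ENNReal.toReal_pos hpos.ne' (measure_ne_top _ _)).ne', mul_one]

/-- Case `γ = 0` of the linear-combination stability: with `X_j = σ_j (S_j + E)`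
for a spectral random vector `S` and independent unit exponential `E`, and a
nonnegative vector `a` with `aᵀσ > 0` and `P[aᵀX > 0] > 0`, conditionally on being
positive, `aᵀX` is exponentially distributed with mean `aᵀσ`: for all `x ≥ 0`,
`P[aᵀX > x | aᵀX > 0] = e^{-x/aᵀσ}`. -/
theorem gp_linear_combination_gumbel
    {Ω : Type*} [MeasurableSpace Ω] (μ : Measure Ω) [IsProbabilityMeasure μ]
    {d : ℕ} (hd : 0 < d)
    (σ : Fin d → ℝ) (hσ : ∀ j, 0 < σ j)
    (a : Fin d → ℝ) (ha : ∀ j, 0 ≤ a j) (haσ : 0 < ∑ j, a j * σ j)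
    (S : Ω → Fin d → EReal) (E : Ω → ℝ)
    (hSmeas : Measurable S) (hEmeas : Measurable E)
    (hSle : ∀ ω j, S ω j ≤ 0)
    (hSmax : ∀ᵐ ω ∂μ, (⨆ j, S ω j) = 0)
    (hSbot : ∀ j, 0 < μ {ω | ⊥ < S ω j})
    (hE : ∀ t : ℝ, 0 ≤ t → μ {ω | t < E ω} = ENNReal.ofReal (Real.exp (-t)))
    (hindep : IndepFun S E μ)
    (X : Ω → Fin d → EReal)
    (hX : ∀ ω j, X ω j = (σ j : EReal) * (S ω j + (E ω : EReal)))
    (hpos : 0 < μ {ω | (0 : EReal) < ∑ j, (a j : EReal) * X ω j}) :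
    ∀ x : ℝ, 0 ≤ x →
      (μ {ω | (x : EReal) < ∑ j, (a j : EReal) * X ω j}).toReal /
          (μ {ω | (0 : EReal) < ∑ j, (a j : EReal) * X ω j}).toReal =
        Real.exp (-x / ∑ j, a j * σ j) :=
  gp_linear_combination_gumbel_general μ σ hσ a ha haσ S E hSmeas hEmeas hSle hE hindep X hX hpos
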